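/- Let A be a unital *-algebra over ℂ, q a C*-seminorm on A, D a C*-algebra, E a Hilbert C*-module over D, and (𝒟, π) a representation of A on E. For a fixed ξ ∈ 𝒟, the following are equivalent: (1) there is C > 0 with ‖⟪ξ, π(a)ξ⟫‖ ≤ C·q(a) for all a ∈ A; (2) there is C > 0 with ‖π(a)ξ‖ ≤ C·q(a) for all a ∈ A; (3) ‖π(a)ξ‖ ≤ ‖ξ‖·q(a) for all a ∈ A. Moreover, the set of all ξ ∈ 𝒟 with these equivalent properties is a sub-A-D-bimodule of 𝒟: it is a ℂ-linear subspace closed under the D-module action and under π(a) for every a ∈ A. -/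

import Mathlib

open scoped RightActions

/-- The class `CStarModule` as it stood in Mathlib of December 2024 (right `A`-action via
`SMul Aᵐᵒᵖ E`), restated here because Mathlib's `CStarModule` has since changed meaning. -/
class OldCStarModule (A E : Type*) [NonUnitalSemiring A] [StarRing A]
    [Module ℂ A] [AddCommGroup E] [Module ℂ E] [PartialOrder A] [SMul Aᵐᵒᵖ E] [Norm A] [Norm E]
    extends Inner A E where
  inner_add_right {x} {y} {z} : inner x (y + z) = inner x y + inner x z
  inner_self_nonneg {x} : 0 ≤ inner x x
  inner_self {x} : inner x x = 0 ↔ x = 0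
  inner_op_smul_right {a : A} {x y : E} : inner x (y <• a) = inner x y * a
  inner_smul_right_complex {z : ℂ} {x} {y} : inner x (z • y) = z • inner x y
  star_inner x y : star (inner x y) = inner y x
  norm_eq_sqrt_norm_inner_self x : ‖x‖ = Real.sqrt ‖inner x x‖

variable (A : Type*) [Ring A] [Algebra ℂ A] [StarRing A] [StarModule ℂ A]
variable (D : Type*) [NonUnitalNormedRing D] [StarRing D] [CStarRing D] [PartialOrder D]
  [StarOrderedRing D] [NormedSpace ℂ D] [IsScalarTower ℂ D D] [SMulCommClass ℂ D D]
  [StarModule ℂ D] [CompleteSpace D]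
variable (E : Type*) [NormedAddCommGroup E] [NormedSpace ℂ E] [SMul Dᵐᵒᵖ E] [OldCStarModule D E]
  [CompleteSpace E]

/-- A representation of a unital `⋆`-algebra `A` on a Hilbert C*-module `E` over a C*-algebra
`D`: a dense `D`-submodule `dom ⊆ E` together with a unital algebra homomorphism `π` from `A`
into the `D`-module endomorphisms of `dom` satisfying `⟪π a ξ, η⟫ = ⟪ξ, π (star a) η⟫` for the
`D`-valued inner product. -/
structure ModuleRep where
  dom : Submodule ℂ E
  smul_mem' : ∀ (d : D) {x : E}, x ∈ dom → x <• d ∈ dom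
  dense : Dense (dom : Set E)
  π : A → (dom →ₗ[ℂ] dom)
  π_one : π 1 = LinearMap.id
  π_mul : ∀ a b : A, π (a * b) = (π a).comp (π b)
  π_add : ∀ a b : A, π (a + b) = π a + π b
  π_smul : ∀ (c : ℂ) (a : A), π (c • a) = c • π a
  π_smulD : ∀ (a : A) (d : D) (x : dom),
    ((π a ⟨(x : E) <• d, smul_mem' d x.2⟩ : dom) : E) = ((π a x : dom) : E) <• d
  π_star : ∀ (a : A) (ξ η : dom),
    (inner D ((π a ξ : dom) : E) ((η : dom) : E) : D) = inner D ((ξ : dom) : E) ((π (star a) η : dom) : E)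

variable {A D E}

/-- `ξ` is a `q`-bounded vector for the representation `ρ`:
`‖π a ξ‖ ≤ ‖ξ‖ * q a` for all `a ∈ A`. -/
def IsBoundedVec (ρ : ModuleRep A D E) (q : A → ℝ) (ξ : ρ.dom) : Prop :=
  ∀ a : A, ‖((ρ.π a ξ : ρ.dom) : E)‖ ≤ ‖((ξ : ρ.dom) : E)‖ * q a


/-!
Only (1) ⇒ (3) has content. Write `f b = ‖⟪ξ, π b ξ⟫‖`. Since `‖π b ξ‖² = f (b⋆b)`,
Cauchy–Schwarz gives `f b ² ≤ ‖ξ‖² f (b⋆b)`. Iterating along `a, a⋆a, (a⋆a)⋆(a⋆a), …` and using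
`q (b⋆b) = q b ²`, the bound `f ≤ C q` becomes `(f a / ‖ξ‖²) ^ 2ⁿ ≤ (C / ‖ξ‖²) (q a) ^ 2ⁿ` for
every `n`, and taking `2ⁿ`-th roots removes `C`: `f a ≤ ‖ξ‖² q a`. Applied to `a⋆a` this is (3).
Hence any bound `‖π a ξ‖ ≤ M q a` already gives the sharp one, which is all the closure
properties need.
-/

namespace OldCStarModule

section Algebra

variable {B F : Type*} [NonUnitalRing B] [StarRing B] [Module ℂ B] [PartialOrder B] [Norm B]
  [AddCommGroup F] [Module ℂ F] [SMul Bᵐᵒᵖ F] [Norm F] [OldCStarModule B F]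

local notation "⟪" x ", " y "⟫" => inner B x y

lemma inner_sub_right (x y z : F) : ⟪x, y - z⟫ = ⟪x, y⟫ - ⟪x, z⟫ :=
  eq_sub_of_add_eq (by rw [← inner_add_right, sub_add_cancel])

lemma inner_sub_left (x y z : F) : ⟪x - y, z⟫ = ⟪x, z⟫ - ⟪y, z⟫ := by
  rw [← star_inner z, inner_sub_right, star_sub, star_inner, star_inner]

lemma inner_zero_left (y : F) : ⟪0, y⟫ = 0 := by
  simpa using inner_sub_left (B := B) (0 : F) 0 y

lemma inner_op_smul_left (x y : F) (a : B) : ⟪x <• a, y⟫ = star a * ⟪x, y⟫ := by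
  rw [← star_inner y, inner_op_smul_right, star_mul, star_inner]

lemma inner_smul_right_real (x y : F) (r : ℝ) : ⟪x, r • y⟫ = r • ⟪x, y⟫ := by
  rw [RCLike.real_smul_eq_coe_smul (K := ℂ) r y, inner_smul_right_complex,
    ← RCLike.real_smul_eq_coe_smul (K := ℂ)]

lemma inner_smul_left_real [StarModule ℂ B] (x y : F) (r : ℝ) : ⟪r • x, y⟫ = r • ⟪x, y⟫ := by
  rw [← star_inner y, inner_smul_right_real, star_smul, star_inner, star_trivial]

end Algebra

section Norm

variable {B F : Type*} [NonUnitalNormedRing B] [StarRing B] [Module ℂ B] [PartialOrder B]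
  [AddCommGroup F] [Module ℂ F] [SMul Bᵐᵒᵖ F] [Norm F] [OldCStarModule B F]

local notation "⟪" x ", " y "⟫" => inner B x y

variable (B) in
lemma norm_sq_eq (x : F) : ‖x‖ ^ 2 = ‖⟪x, x⟫‖ := by
  rw [norm_eq_sqrt_norm_inner_self (A := B) x, Real.sq_sqrt (norm_nonneg _)]

lemma norm_op_smul_le [CStarRing B] (x : F) (d : B) : ‖x <• d‖ ≤ ‖x‖ * ‖d‖ := by
  refine le_of_pow_le_pow_left₀ two_ne_zero ?_ ?_
  · rw [norm_eq_sqrt_norm_inner_self (A := B) x]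
    positivity
  calc ‖x <• d‖ ^ 2 = ‖star d * ⟪x, x⟫ * d‖ := by
        rw [norm_sq_eq B, inner_op_smul_right, inner_op_smul_left]
    _ ≤ ‖star d‖ * ‖⟪x, x⟫‖ * ‖d‖ := norm_mul₃_le
    _ = (‖x‖ * ‖d‖) ^ 2 := by rw [norm_star, ← norm_sq_eq B]; ring

end Norm

variable {B F : Type*} [NonUnitalCStarAlgebra B] [PartialOrder B] [StarOrderedRing B]
  [AddCommGroup F] [Module ℂ F] [SMul Bᵐᵒᵖ F] [Norm F] [OldCStarModule B F]

local notation "⟪" x ", " y "⟫" => inner B x y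

lemma inner_mul_inner_swap_le (x y : F) : ⟪y, x⟫ * ⟪x, y⟫ ≤ ‖x‖ ^ 2 • ⟪y, y⟫ := by
  rcases eq_or_ne x 0 with rfl | hx
  · rw [inner_zero_left, mul_zero]
    exact smul_nonneg (sq_nonneg _) inner_self_nonneg
  have hr : 0 < ‖x‖ ^ 2 := by
    rw [norm_sq_eq B]
    exact norm_pos_iff.mpr (mt inner_self.mp hx)
  set a := ⟪x, y⟫
  have ha : star a = ⟪y, x⟫ := star_inner x y
  have hconj : star a * ⟪x, x⟫ * a ≤ ‖x‖ ^ 2 • (star a * a) := by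
    rw [norm_sq_eq B]
    exact CStarAlgebra.star_left_conjugate_le_norm_smul (star_inner x x)
  set r := ‖x‖ ^ 2
  have : 0 ≤ r • (r • ⟪y, y⟫ - star a * a) := calc
    0 ≤ ⟪x <• a - r • y, x <• a - r • y⟫ := inner_self_nonneg
    _ = star a * ⟪x, x⟫ * a - r • (star a * a) - r • (star a * a) + r • r • ⟪y, y⟫ := by
      rw [inner_sub_left, inner_sub_right, inner_sub_right, inner_op_smul_left,
        inner_op_smul_left, inner_op_smul_right, inner_op_smul_right, inner_smul_right_real,
        inner_smul_right_real, inner_smul_left_real, inner_smul_left_real, ← ha]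
      simp only [mul_smul_comm, smul_mul_assoc, mul_assoc]
      abel
    _ ≤ r • (star a * a) - r • (star a * a) - r • (star a * a) + r • r • ⟪y, y⟫ := by
      gcongr
    _ = r • (r • ⟪y, y⟫ - star a * a) := by rw [smul_sub]; abel
  rw [← ha, ← sub_nonneg]
  exact (smul_nonneg_iff_nonneg_of_pos_left hr).mp this

lemma norm_inner_le (x y : F) : ‖⟪x, y⟫‖ ≤ ‖x‖ * ‖y‖ := by
  have hnorm (z : F) : 0 ≤ ‖z‖ := by
    rw [norm_eq_sqrt_norm_inner_self (A := B) z]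
    exact Real.sqrt_nonneg _
  refine le_of_pow_le_pow_left₀ two_ne_zero (mul_nonneg (hnorm x) (hnorm y)) ?_
  calc ‖⟪x, y⟫‖ ^ 2 = ‖⟪y, x⟫ * ⟪x, y⟫‖ := by
        rw [← star_inner x y, CStarRing.norm_star_mul_self, sq]
    _ ≤ ‖‖x‖ ^ 2 • ⟪y, y⟫‖ := CStarAlgebra.norm_le_norm_of_nonneg_of_le
        (by rw [← star_inner x y]; exact star_mul_self_nonneg _) (inner_mul_inner_swap_le x y)
    _ = (‖x‖ * ‖y‖) ^ 2 := by
        rw [norm_smul, Real.norm_of_nonneg (sq_nonneg _), ← norm_sq_eq B y, mul_pow]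

end OldCStarModule

lemma le_of_forall_pow_two_pow_le_mul {x y K : ℝ} (hy : 0 ≤ y)
    (h : ∀ n : ℕ, x ^ 2 ^ n ≤ K * y ^ 2 ^ n) : x ≤ y := by
  by_contra! hyx
  rcases hy.eq_or_lt with rfl | hy
  · have h0 := h 0
    simp only [pow_zero, pow_one, mul_zero] at h0
    linarith
  have hr : 1 < x / y := (one_lt_div hy).mpr hyx
  obtain ⟨n, hn⟩ := pow_unbounded_of_one_lt K hr
  have hK : (x / y) ^ 2 ^ n ≤ K := by
    rw [div_pow, div_le_iff₀ (by positivity)]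
    exact h n
  have hmono : (x / y) ^ n ≤ (x / y) ^ 2 ^ n := pow_le_pow_right₀ hr.le Nat.lt_two_pow_self.le
  linarith

lemma le_of_sq_le_apply_star_mul_self {R : Type*} [Mul R] [Star R] {f q : R → ℝ} {K : ℝ}
    (hf₀ : ∀ b, 0 ≤ f b) (hq₀ : ∀ b, 0 ≤ q b) (hq : ∀ b, q (star b * b) = q b ^ 2)
    (hf : ∀ b, f b ^ 2 ≤ f (star b * b)) (hfq : ∀ b, f b ≤ K * q b) (a : R) : f a ≤ q a := by
  set s : R → R := fun b => star b * b
  have hf_iter (n : ℕ) : f a ^ 2 ^ n ≤ f (s^[n] a) := by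
    induction n with
    | zero => simp
    | succ n ih =>
      rw [pow_succ, pow_mul, Function.iterate_succ_apply']
      exact (pow_le_pow_left₀ (by positivity [hf₀ a]) ih 2).trans (hf _)
  have hq_iter (n : ℕ) : q (s^[n] a) = q a ^ 2 ^ n := by
    induction n with
    | zero => simp
    | succ n ih => rw [Function.iterate_succ_apply', hq, ih, ← pow_mul, ← pow_succ]
  exact le_of_forall_pow_two_pow_le_mul (hq₀ a)
    fun n => (hf_iter n).trans ((hfq _).trans_eq (by rw [hq_iter]))

lemma exists_pos_forall_le_mul {ι : Type*} {f q : ι → ℝ} {M : ℝ} (hq₀ : ∀ i, 0 ≤ q i)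
    (h : ∀ i, f i ≤ M * q i) : ∃ C > 0, ∀ i, f i ≤ C * q i :=
  ⟨max M 1, by positivity, fun i => (h i).trans (by gcongr; exacts [hq₀ i, le_max_left _ _])⟩

section Representation

variable {A D E : Type*} [Ring A] [Algebra ℂ A] [StarRing A] [NonUnitalNormedRing D] [StarRing D]
  [PartialOrder D] [NormedSpace ℂ D] [NormedAddCommGroup E] [NormedSpace ℂ E] [SMul Dᵐᵒᵖ E]
  [OldCStarModule D E] {ρ : ModuleRep A D E} {q : A → ℝ}

namespace IsBoundedVec

lemma zero : IsBoundedVec ρ q 0 := fun a => by simp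

lemma smul (c : ℂ) {ξ : ρ.dom} (hξ : IsBoundedVec ρ q ξ) : IsBoundedVec ρ q (c • ξ) :=
  fun a => by
    simp only [map_smul, Submodule.coe_smul, norm_smul, mul_assoc]
    exact mul_le_mul_of_nonneg_left (hξ a) (norm_nonneg c)

end IsBoundedVec

namespace ModuleRep

variable (ρ)

lemma norm_π_apply_sq (b : A) (ξ : ρ.dom) :
    ‖(ρ.π b ξ : E)‖ ^ 2 = ‖inner D (ξ : E) (ρ.π (star b * b) ξ : E)‖ := by
  rw [OldCStarModule.norm_sq_eq D, ρ.π_star, ρ.π_mul, LinearMap.comp_apply]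

variable [CStarRing D] [StarOrderedRing D] [IsScalarTower ℂ D D] [SMulCommClass ℂ D D]
  [StarModule ℂ D] [CompleteSpace D]

-- `D` carries its C⋆-algebra structure unbundled, so it is assembled here.
lemma norm_inner_π_apply_le (b : A) (ξ : ρ.dom) :
    ‖inner D (ξ : E) (ρ.π b ξ : E)‖ ≤ ‖(ξ : E)‖ * ‖(ρ.π b ξ : E)‖ :=
  let _ : NonUnitalCStarAlgebra D :=
    { ‹NonUnitalNormedRing D›, ‹StarRing D›, ‹CStarRing D›, ‹NormedSpace ℂ D›,
      ‹CompleteSpace D›, ‹IsScalarTower ℂ D D›, ‹SMulCommClass ℂ D D›, ‹StarModule ℂ D› with }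
  OldCStarModule.norm_inner_le _ _

lemma norm_inner_π_apply_sq_le (b : A) (ξ : ρ.dom) :
    ‖inner D (ξ : E) (ρ.π b ξ : E)‖ ^ 2 ≤
      ‖(ξ : E)‖ ^ 2 * ‖inner D (ξ : E) (ρ.π (star b * b) ξ : E)‖ := by
  rw [← norm_π_apply_sq, ← mul_pow]
  exact pow_le_pow_left₀ (norm_nonneg _) (ρ.norm_inner_π_apply_le b ξ) 2

variable {ρ}

lemma norm_inner_π_apply_le_of_le_mul (hq₀ : ∀ a, 0 ≤ q a)
    (hq : ∀ a, q (star a * a) = q a ^ 2) {ξ : ρ.dom} {C : ℝ}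
    (h : ∀ a, ‖inner D (ξ : E) (ρ.π a ξ : E)‖ ≤ C * q a) (a : A) :
    ‖inner D (ξ : E) (ρ.π a ξ : E)‖ ≤ ‖(ξ : E)‖ ^ 2 * q a := by
  rcases (norm_nonneg (ξ : E)).eq_or_lt with hξ | hξ
  · simpa [← hξ] using ρ.norm_inner_π_apply_le a ξ
  have hN : 0 < ‖(ξ : E)‖ ^ 2 := by positivity
  have key := le_of_sq_le_apply_star_mul_self (K := C / ‖(ξ : E)‖ ^ 2)
    (f := fun b => ‖inner D (ξ : E) (ρ.π b ξ : E)‖ / ‖(ξ : E)‖ ^ 2)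
    (fun b => by positivity) hq₀ hq (fun b => ?_) (fun b => ?_) a
  · rwa [div_le_iff₀ hN, mul_comm] at key
  · rw [div_pow, sq (‖(ξ : E)‖ ^ 2), ← div_div, div_le_div_iff_of_pos_right hN,
      div_le_iff₀ hN, mul_comm]
    exact ρ.norm_inner_π_apply_sq_le b ξ
  · rw [div_mul_eq_mul_div]
    exact div_le_div_of_nonneg_right (h b) hN.le

theorem isBoundedVec_of_norm_inner_le_mul (hq₀ : ∀ a, 0 ≤ q a)
    (hq : ∀ a, q (star a * a) = q a ^ 2) {ξ : ρ.dom} {C : ℝ}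
    (h : ∀ a, ‖inner D (ξ : E) (ρ.π a ξ : E)‖ ≤ C * q a) : IsBoundedVec ρ q ξ := fun a => by
  refine le_of_pow_le_pow_left₀ two_ne_zero (mul_nonneg (norm_nonneg _) (hq₀ a)) ?_
  rw [norm_π_apply_sq, mul_pow, ← hq]
  exact norm_inner_π_apply_le_of_le_mul hq₀ hq h _

lemma norm_inner_π_apply_le_mul_of_norm_le {ξ : ρ.dom} {M : ℝ}
    (h : ∀ a, ‖(ρ.π a ξ : E)‖ ≤ M * q a) (a : A) :
    ‖inner D (ξ : E) (ρ.π a ξ : E)‖ ≤ ‖(ξ : E)‖ * M * q a :=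
  (ρ.norm_inner_π_apply_le a ξ).trans (by rw [mul_assoc]; gcongr; exact h a)

theorem isBoundedVec_of_norm_le_mul (hq₀ : ∀ a, 0 ≤ q a)
    (hq : ∀ a, q (star a * a) = q a ^ 2) {ξ : ρ.dom} {M : ℝ}
    (h : ∀ a, ‖(ρ.π a ξ : E)‖ ≤ M * q a) : IsBoundedVec ρ q ξ :=
  isBoundedVec_of_norm_inner_le_mul hq₀ hq (norm_inner_π_apply_le_mul_of_norm_le h)

end ModuleRep

namespace IsBoundedVec

variable [CStarRing D] [StarOrderedRing D] [IsScalarTower ℂ D D] [SMulCommClass ℂ D D]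
  [StarModule ℂ D] [CompleteSpace D]

lemma add (hq₀ : ∀ a, 0 ≤ q a) (hq : ∀ a, q (star a * a) = q a ^ 2) {ξ η : ρ.dom}
    (hξ : IsBoundedVec ρ q ξ) (hη : IsBoundedVec ρ q η) : IsBoundedVec ρ q (ξ + η) :=
  ModuleRep.isBoundedVec_of_norm_le_mul hq₀ hq (M := ‖(ξ : E)‖ + ‖(η : E)‖) fun a => by
    rw [map_add, Submodule.coe_add, add_mul]
    exact (norm_add_le _ _).trans (add_le_add (hξ a) (hη a))

lemma op_smul (hq₀ : ∀ a, 0 ≤ q a) (hq : ∀ a, q (star a * a) = q a ^ 2) (d : D) {ξ : ρ.dom}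
    (hξ : IsBoundedVec ρ q ξ) : IsBoundedVec ρ q ⟨(ξ : E) <• d, ρ.smul_mem' d ξ.2⟩ :=
  ModuleRep.isBoundedVec_of_norm_le_mul hq₀ hq (M := ‖(ξ : E)‖ * ‖d‖) fun a => by
    rw [ρ.π_smulD, mul_right_comm]
    exact (OldCStarModule.norm_op_smul_le _ d).trans (by gcongr; exact hξ a)

lemma π_apply (hq₀ : ∀ a, 0 ≤ q a) (hq : ∀ a, q (star a * a) = q a ^ 2)
    (hq_mul : ∀ a b, q (a * b) ≤ q a * q b) (b : A) {ξ : ρ.dom} (hξ : IsBoundedVec ρ q ξ) :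
    IsBoundedVec ρ q (ρ.π b ξ) :=
  ModuleRep.isBoundedVec_of_norm_le_mul hq₀ hq (M := ‖(ξ : E)‖ * q b) fun a => by
    rw [← LinearMap.comp_apply, ← ρ.π_mul, mul_right_comm]
    exact (hξ (a * b)).trans (by rw [mul_assoc]; gcongr; exact hq_mul a b)

end IsBoundedVec

end Representation

theorem boundedVec_tfae_and_submodule_general (ρ : ModuleRep A D E) (q : A → ℝ)
    (hq_nonneg : ∀ a : A, 0 ≤ q a)
    (hq_mul : ∀ a b : A, q (a * b) ≤ q a * q b)
    (hq_cstar : ∀ a : A, q (star a * a) = q a ^ 2) :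
    (∀ ξ : ρ.dom,
      ((∃ C > (0 : ℝ), ∀ a : A,
          ‖(inner D ((ξ : ρ.dom) : E) ((ρ.π a ξ : ρ.dom) : E) : D)‖ ≤ C * q a) ↔
        (∃ C > (0 : ℝ), ∀ a : A, ‖((ρ.π a ξ : ρ.dom) : E)‖ ≤ C * q a)) ∧
      ((∃ C > (0 : ℝ), ∀ a : A, ‖((ρ.π a ξ : ρ.dom) : E)‖ ≤ C * q a) ↔
        IsBoundedVec ρ q ξ)) ∧
    -- the set of bounded vectors is a sub-`A`-`D`-bimodule of `𝒟`:
    IsBoundedVec ρ q (0 : ρ.dom) ∧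
    (∀ ξ η : ρ.dom, IsBoundedVec ρ q ξ → IsBoundedVec ρ q η → IsBoundedVec ρ q (ξ + η)) ∧
    (∀ (c : ℂ) (ξ : ρ.dom), IsBoundedVec ρ q ξ → IsBoundedVec ρ q (c • ξ)) ∧
    (∀ (d : D) (ξ : ρ.dom), IsBoundedVec ρ q ξ →
      IsBoundedVec ρ q ⟨(ξ : E) <• d, ρ.smul_mem' d ξ.2⟩) ∧
    (∀ (a : A) (ξ : ρ.dom), IsBoundedVec ρ q ξ → IsBoundedVec ρ q (ρ.π a ξ)) := by
  refine ⟨fun ξ => ?_, .zero, fun _ _ => .add hq_nonneg hq_cstar, fun c _ => .smul c,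
    fun d _ => .op_smul hq_nonneg hq_cstar d, fun b _ => .π_apply hq_nonneg hq_cstar hq_mul b⟩
  have bounded_of_inner : (∃ C > (0 : ℝ), ∀ a, ‖inner D (ξ : E) (ρ.π a ξ : E)‖ ≤ C * q a) →
      IsBoundedVec ρ q ξ := fun ⟨_, _, h⟩ =>
    ModuleRep.isBoundedVec_of_norm_inner_le_mul hq_nonneg hq_cstar h
  have bounded_of_norm : (∃ C > (0 : ℝ), ∀ a, ‖(ρ.π a ξ : E)‖ ≤ C * q a) →
      IsBoundedVec ρ q ξ := fun ⟨_, _, h⟩ =>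
    ModuleRep.isBoundedVec_of_norm_le_mul hq_nonneg hq_cstar h
  have norm_of_bounded (hξ : IsBoundedVec ρ q ξ) :
      ∃ C > (0 : ℝ), ∀ a, ‖(ρ.π a ξ : E)‖ ≤ C * q a :=
    exists_pos_forall_le_mul hq_nonneg hξ
  have inner_of_norm : (∃ C > (0 : ℝ), ∀ a, ‖(ρ.π a ξ : E)‖ ≤ C * q a) →
      ∃ C > (0 : ℝ), ∀ a, ‖inner D (ξ : E) (ρ.π a ξ : E)‖ ≤ C * q a := fun ⟨_, _, h⟩ =>
    exists_pos_forall_le_mul hq_nonneg (ModuleRep.norm_inner_π_apply_le_mul_of_norm_le h)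
  exact ⟨⟨norm_of_bounded ∘ bounded_of_inner, inner_of_norm⟩, ⟨bounded_of_norm, norm_of_bounded⟩⟩

/-- Let `q` be a C*-seminorm on the unital `⋆`-algebra `A` and `(𝒟, π)` a representation of `A`
on a Hilbert C*-module `E` over `D`.  For `ξ ∈ 𝒟` the following are equivalent:
(1) `‖⟪ξ, π a ξ⟫‖ ≤ C * q a` for some `C > 0`; (2) `‖π a ξ‖ ≤ C * q a` for some `C > 0`;
(3) `‖π a ξ‖ ≤ ‖ξ‖ * q a`.  Moreover the set of such vectors is a sub-`A`-`D`-bimodule of `𝒟`: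
a `ℂ`-linear subspace closed under the `D`-action and under every `π a`. -/
theorem boundedVec_tfae_and_submodule (ρ : ModuleRep A D E) (q : A → ℝ)
    (hq_nonneg : ∀ a : A, 0 ≤ q a)
    (hq_smul : ∀ (c : ℂ) (a : A), q (c • a) = ‖c‖ * q a)
    (hq_add : ∀ a b : A, q (a + b) ≤ q a + q b)
    (hq_mul : ∀ a b : A, q (a * b) ≤ q a * q b)
    (hq_cstar : ∀ a : A, q (star a * a) = q a ^ 2) :
    (∀ ξ : ρ.dom,
      ((∃ C > (0 : ℝ), ∀ a : A,
          ‖(inner D ((ξ : ρ.dom) : E) ((ρ.π a ξ : ρ.dom) : E) : D)‖ ≤ C * q a) ↔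
        (∃ C > (0 : ℝ), ∀ a : A, ‖((ρ.π a ξ : ρ.dom) : E)‖ ≤ C * q a)) ∧
      ((∃ C > (0 : ℝ), ∀ a : A, ‖((ρ.π a ξ : ρ.dom) : E)‖ ≤ C * q a) ↔
        IsBoundedVec ρ q ξ)) ∧
    -- the set of bounded vectors is a sub-`A`-`D`-bimodule of `𝒟`:
    IsBoundedVec ρ q (0 : ρ.dom) ∧
    (∀ ξ η : ρ.dom, IsBoundedVec ρ q ξ → IsBoundedVec ρ q η → IsBoundedVec ρ q (ξ + η)) ∧
    (∀ (c : ℂ) (ξ : ρ.dom), IsBoundedVec ρ q ξ → IsBoundedVec ρ q (c • ξ)) ∧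
    (∀ (d : D) (ξ : ρ.dom), IsBoundedVec ρ q ξ →
      IsBoundedVec ρ q ⟨(ξ : E) <• d, ρ.smul_mem' d ξ.2⟩) ∧
    (∀ (a : A) (ξ : ρ.dom), IsBoundedVec ρ q ξ → IsBoundedVec ρ q (ρ.π a ξ)) :=
  boundedVec_tfae_and_submodule_general ρ q hq_nonneg hq_mul hq_cstar
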